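/- arXiv:1812.02650 — 4 statements merged into one kernel-verified Lean document; each statement's English description precedes it below -/
import Mathlib

section
/- If p is a prime with p ≡ 1 (mod 16) and a, b are integers with p = a² + b², a ≡ 1 (mod 8), and b ≡ 0 (mod 8), then (a-1)/8 ≡ (p-1)/16 (mod 2). -/
/-- If `p ≡ 1 (mod 16)` is prime, `p = a² + b²`, `a ≡ 1 (mod 8)` and `b ≡ 0 (mod 8)`,
then `(a-1)/8 ≡ (p-1)/16 (mod 2)`. -/
theorem stmt_3 (p : ℕ) (hp : p.Prime) (hp16 : p % 16 = 1)
    (a b : ℤ) (hab : a ^ 2 + b ^ 2 = p) (ha : a % 8 = 1) (hb : b % 8 = 0) :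
    ((a - 1) / 8) % 2 = (((p : ℤ) - 1) / 16) % 2 := by
  obtain ⟨k, hk⟩ : ∃ k, a = 8 * k + 1 := ⟨a / 8, by omega⟩
  obtain ⟨m, hm⟩ : ∃ m, b = 8 * m := ⟨b / 8, by omega⟩
  subst hk hm
  have hp' : (p : ℤ) = 64 * k ^ 2 + 16 * k + 1 + 64 * m ^ 2 := by ring_nf; ring_nf at hab; linarith
  rw [hp']
  have h1 : (8 * k + 1 - 1) / 8 = k := by omega
  have h2 : (64 * k ^ 2 + 16 * k + 1 + 64 * m ^ 2 - 1) / 16 = 4 * k ^ 2 + k + 4 * m ^ 2 := by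
    set K := k ^ 2; set M := m ^ 2; omega
  rw [h1, h2]
  set K := k ^ 2 with hK
  have : K % 2 = (k % 2) := by rw [hK, pow_two]; conv_lhs => rw [Int.mul_emod]
                               rcases Int.emod_two_eq k with h | h <;> simp [h]
  set M := m ^ 2; omega
end

section
/- Let u, v be integers with u odd, u > 0, u ≡ 1 (mod 8) and v ≡ 0 (mod 4), and set h = u + 2v, g = u + v (so that h + g√2 = (u + v√2)(1+√2)). If v ≠ 0, then the Jacobi symbol (2h/g) equals (-1)^(v/4) · (v/u), where (v/u) denotes the Jacobi symbol. -/
/-- With `h = u + 2v`, `g = u + v` (coefficients of `(u+v√2)(1+√2)`), `u > 0`,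
`u ≡ 1 (mod 8)`, `v ≡ 0 (mod 4)`, `v ≠ 0`, `g > 0`, the Jacobi symbols satisfy
`(2h/g) = (-1)^(v/4) · (v/u)`. -/
theorem stmt_4 (u v : ℤ) (hu : 0 < u) (hu8 : u % 8 = 1) (hv4 : v % 4 = 0) (hv : v ≠ 0)
    (hg : 0 < u + v) :
    jacobiSym (2 * (u + 2 * v)) (u + v).toNat =
      (-1 : ℤ) ^ ((v / 4).natAbs) * jacobiSym v u.toNat := by
  set G := (u + v).toNat with hGdef
  set U := u.toNat with hUdef
  have h1 : (G : ℤ) = u + v := Int.toNat_of_nonneg hg.le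
  have h2 : (U : ℤ) = u := Int.toNat_of_nonneg hu.le
  have hGodd : G % 2 = 1 := by omega
  have hUodd : U % 2 = 1 := by omega
  have hGOdd : Odd G := Nat.odd_iff.mpr hGodd
  have hUOdd : Odd U := Nat.odd_iff.mpr hUodd
  set n := 4 * (v / 4).natAbs with hndef
  -- G ≡ U mod n since n = |v| and G - U = v
  have hmod : G % n = U % n := by
    have hd : (n : ℤ) ∣ (U : ℤ) - (G : ℤ) := by
      have hn : ((n : ℕ) : ℤ) = (v.natAbs : ℤ) := by omega
      rw [hn, h1, h2, show u - (u + v) = -v by ring]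
      exact dvd_neg.mpr (Int.natAbs_dvd.mpr dvd_rfl)
    have h3 : (G : ℤ) % n = (U : ℤ) % n := Int.modEq_iff_dvd.mpr hd
    have h4 : ((G % n : ℕ) : ℤ) = ((U % n : ℕ) : ℤ) := by
      rw [Int.natCast_mod, Int.natCast_mod]; exact h3
    exact_mod_cast h4
  have e1 : jacobiSym (2 * (u + 2 * v)) G
      = jacobiSym 2 G * jacobiSym (u + 2 * v) G := jacobiSym.mul_left 2 (u + 2 * v) G
  have e2 : jacobiSym (u + 2 * v) G = jacobiSym v G := by
    apply jacobiSym.mod_left'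
    rw [h1, show u + 2 * v = v + (u + v) * 1 by ring]
    exact Int.add_mul_emod_self_left ..
  have e3 : jacobiSym v G = jacobiSym (v / 4) (G % n) := by
    rw [← jacobiSym.div_four_left hv4 hGodd, jacobiSym.mod_right (v / 4) hGOdd]
  have e4 : jacobiSym v U = jacobiSym (v / 4) (U % n) := by
    rw [← jacobiSym.div_four_left hv4 hUodd, jacobiSym.mod_right (v / 4) hUOdd]
  have e5 : jacobiSym 2 G = (-1 : ℤ) ^ ((v / 4).natAbs) := by
    rw [jacobiSym.at_two hGOdd, ZMod.χ₈_nat_eq_if_mod_eight]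
    rcases (show v % 8 = 0 ∨ v % 8 = 4 by omega) with h8 | h8
    · have hG8 : G % 8 = 1 := by omega
      have hev : Even ((v / 4).natAbs) := Nat.even_iff.mpr (by omega)
      rw [hev.neg_one_pow]
      simp [hG8, hGodd]
    · have hG8 : G % 8 = 5 := by omega
      have hod : Odd ((v / 4).natAbs) := Nat.odd_iff.mpr (by omega)
      rw [hod.neg_one_pow]
      simp [hG8, hGodd]
  rw [e1, e2, e3, e4, e5, hmod]
end

section
/- Let u, v ∈ ℤ with u odd and positive. Set u' = 577u + 816v and v' = 408u + 577v, and assume u' > 0. Then the Jacobi symbols satisfy (v'/u') = (v/u). -/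
lemma spin_step (u v : ℤ) (hu : Odd u) (hupos : 0 < u) (h1 : 0 < 3*u+4*v) :
    jacobiSym (2*u+3*v) (3*u+4*v).toNat
      = (if u % 4 = 1 then -1 else 1) * jacobiSym v u.toNat := by
  have hu2 : u % 2 = 1 := Int.odd_iff.mp hu
  have hcn : (u.toNat : ℤ) = u := Int.toNat_of_nonneg hupos.le
  have hcn₁ : ((3*u+4*v).toNat : ℤ) = 3*u+4*v := Int.toNat_of_nonneg h1.le
  have hno : Odd u.toNat := Nat.odd_iff.mpr (by omega)
  have hn₁o : Odd (3*u+4*v).toNat := Nat.odd_iff.mpr (by omega)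
  have g2 : (2:ℤ).gcd ((3*u+4*v).toNat) = 1 := by
    simp only [Int.gcd, Int.natAbs_natCast]
    exact hn₁o.coprime_two_left
  have g2' : (2:ℤ).gcd (u.toNat) = 1 := by
    simp only [Int.gcd, Int.natAbs_natCast]
    exact hno.coprime_two_left
  have h4 : jacobiSym 4 (3*u+4*v).toNat = 1 := by
    have e : ((2:ℤ)^2) = 4 := by norm_num
    rw [← e]; exact jacobiSym.sq_one' g2
  have h4' : jacobiSym 4 u.toNat = 1 := by
    have e : ((2:ℤ)^2) = 4 := by norm_num
    rw [← e]; exact jacobiSym.sq_one' g2'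
  have key1 : jacobiSym (u.toNat : ℤ) (3*u+4*v).toNat
      = jacobiSym (-1) (3*u+4*v).toNat * jacobiSym (2*u+3*v) (3*u+4*v).toNat := by
    have hmod : (u.toNat : ℤ) % ((3*u+4*v).toNat : ℤ)
        = (-1 * (4 * (2*u+3*v))) % ((3*u+4*v).toNat : ℤ) := by
      have hdvd : (((3*u+4*v).toNat : ℤ)) ∣ (-1 * (4 * (2*u+3*v)) - (u.toNat : ℤ)) :=
        ⟨-3, by rw [hcn, hcn₁]; ring⟩
      exact Int.modEq_iff_dvd.mpr hdvd
    rw [jacobiSym.mod_left' hmod, jacobiSym.mul_left, jacobiSym.mul_left, h4]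
    ring
  have key2 : jacobiSym ((3*u+4*v).toNat : ℤ) u.toNat = jacobiSym v u.toNat := by
    have hmod : ((3*u+4*v).toNat : ℤ) % ((u.toNat : ℤ))
        = (4 * v) % ((u.toNat : ℤ)) := by
      have hdvd : ((u.toNat : ℤ)) ∣ (4 * v - ((3*u+4*v).toNat : ℤ)) :=
        ⟨-3, by rw [hcn, hcn₁]; ring⟩
      exact Int.modEq_iff_dvd.mpr hdvd
    rw [jacobiSym.mod_left' hmod, jacobiSym.mul_left, h4', one_mul]
  have hrec : jacobiSym (u.toNat : ℤ) (3*u+4*v).toNat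
      = jacobiSym ((3*u+4*v).toNat : ℤ) u.toNat := by
    rcases (by omega : u % 4 = 1 ∨ u % 4 = 3) with h | h
    · have hna : u.toNat % 4 = 1 := by omega
      exact_mod_cast jacobiSym.quadratic_reciprocity_one_mod_four hna hn₁o
    · have hnb : (3*u+4*v).toNat % 4 = 1 := by omega
      exact_mod_cast jacobiSym.quadratic_reciprocity_one_mod_four' hno hnb
  have hneg : jacobiSym (-1) (3*u+4*v).toNat = ZMod.χ₄ ((3*u+4*v).toNat) :=
    jacobiSym.at_neg_one hn₁o
  rcases (by omega : u % 4 = 1 ∨ u % 4 = 3) with h | h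
  · have hn₁3 : (3*u+4*v).toNat % 4 = 3 := by omega
    rw [ZMod.χ₄_nat_three_mod_four hn₁3] at hneg
    rw [hneg] at key1
    rw [key2] at hrec
    rw [if_pos h]
    linarith [key1, hrec]
  · have hn₁1 : (3*u+4*v).toNat % 4 = 1 := by omega
    rw [ZMod.χ₄_nat_one_mod_four hn₁1] at hneg
    rw [hneg] at key1
    rw [key2] at hrec
    rw [if_neg (by omega : ¬ u % 4 = 1)]
    linarith [key1, hrec]

/-- Invariance of the spin symbol `[α] = (v/u)` under multiplication by `ε⁸`:
for `u` odd and positive, `u' = 577u + 816v > 0`, `v' = 408u + 577v`, the Jacobi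
symbols satisfy `(v'/u') = (v/u)`. -/
theorem stmt_9 (u v : ℤ) (hu : Odd u) (hupos : 0 < u)
    (hu' : 0 < 577 * u + 816 * v) :
    jacobiSym (408 * u + 577 * v) (577 * u + 816 * v).toNat = jacobiSym v u.toNat := by
  have hu2 : u % 2 = 1 := Int.odd_iff.mp hu
  have h1 : 0 < 3*u+4*v := by linarith
  have h2 : 0 < 17*u+24*v := by linarith
  have h3 : 0 < 99*u+140*v := by linarith
  have ho1 : Odd (3*u+4*v) := Int.odd_iff.mpr (by omega)
  have ho2 : Odd (17*u+24*v) := Int.odd_iff.mpr (by omega)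
  have ho3 : Odd (99*u+140*v) := Int.odd_iff.mpr (by omega)
  have E1 := spin_step u v hu hupos h1
  have E2 := spin_step (3*u+4*v) (2*u+3*v) ho1 h1 (by linarith)
  have E3 := spin_step (17*u+24*v) (12*u+17*v) ho2 h2 (by linarith)
  have E4 := spin_step (99*u+140*v) (70*u+99*v) ho3 h3 (by linarith)
  have r2a : 3*(3*u+4*v)+4*(2*u+3*v) = 17*u+24*v := by ring
  have r2b : 2*(3*u+4*v)+3*(2*u+3*v) = 12*u+17*v := by ring
  have r3a : 3*(17*u+24*v)+4*(12*u+17*v) = 99*u+140*v := by ring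
  have r3b : 2*(17*u+24*v)+3*(12*u+17*v) = 70*u+99*v := by ring
  have r4a : 3*(99*u+140*v)+4*(70*u+99*v) = 577*u+816*v := by ring
  have r4b : 2*(99*u+140*v)+3*(70*u+99*v) = 408*u+577*v := by ring
  rw [r2a, r2b] at E2
  rw [r3a, r3b] at E3
  rw [r4a, r4b] at E4
  rw [E4, E3, E2, E1]
  rcases (by omega : u % 4 = 1 ∨ u % 4 = 3) with h | h
  · rw [if_pos h, if_neg (by omega : ¬ (3*u+4*v) % 4 = 1),
      if_pos (by omega : (17*u+24*v) % 4 = 1), if_neg (by omega : ¬ (99*u+140*v) % 4 = 1)]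
    ring
  · rw [if_neg (by omega : ¬ u % 4 = 1), if_pos (by omega : (3*u+4*v) % 4 = 1),
      if_neg (by omega : ¬ (17*u+24*v) % 4 = 1), if_pos (by omega : (99*u+140*v) % 4 = 1)]
    ring
end

section
/- Let p be a prime with p ≡ 1 (mod 8). Then there exist integers u, v with p = u² - 2v², u > 0, and u ≡ 1 (mod 4). -/
-- irrationality of √2, integer version
lemma aux_sq_ne (x y : ℤ) (h : x ^ 2 = 2 * y ^ 2) : x = 0 ∧ y = 0 := by
  rcases eq_or_ne y 0 with rfl | hy
  · constructor
    · nlinarith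
    · rfl
  · exfalso
    have hx : x ≠ 0 := by
      intro h0; rw [h0] at h; nlinarith [sq_pos_of_ne_zero hy]
    have hN : x.natAbs ^ 2 = 2 * y.natAbs ^ 2 := by
      have := congrArg Int.natAbs h
      simpa [Int.natAbs_mul, Int.natAbs_pow] using this
    have h2 : (2 : ℕ).Prime := Nat.prime_two
    have hxa : x.natAbs ≠ 0 := Int.natAbs_ne_zero.mpr hx
    have hya : y.natAbs ≠ 0 := Int.natAbs_ne_zero.mpr hy
    have := congrArg (fun n => n.factorization 2) hN
    simp [Nat.factorization_mul (two_ne_zero) (pow_ne_zero 2 hya),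
      Nat.factorization_pow, Nat.Prime.factorization h2] at this
    omega


/-- Every prime `p ≡ 1 (mod 8)` has a representation `p = u² - 2v²` with `u > 0`
and `u ≡ 1 (mod 4)`. -/
theorem stmt_13 (p : ℕ) (hp : p.Prime) (hp8 : p % 8 = 1) :
    ∃ u v : ℤ, (p : ℤ) = u ^ 2 - 2 * v ^ 2 ∧ 0 < u ∧ u % 4 = 1 := by
  haveI : Fact p.Prime := ⟨hp⟩
  have hp2 : p ≠ 2 := by omega
  obtain ⟨a, ha⟩ : IsSquare (2 : ZMod p) :=
    (ZMod.exists_sq_eq_two_iff hp2).mpr (Or.inl hp8)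
  -- pigeonhole
  set n : ℕ := Nat.sqrt p with hn
  have hsq : n ^ 2 ≤ p := Nat.sqrt_le' p
  have hn2 : n ^ 2 < p := by
    rcases lt_or_eq_of_le hsq with h | h
    · exact h
    · exfalso
      rcases hp.eq_one_or_self_of_dvd n ⟨n, by rw [← h]; ring⟩ with h1 | h1 <;>
        nlinarith [hp.one_lt]
  have hps : p < (n + 1) ^ 2 := Nat.lt_succ_sqrt' p
  set S : Finset (ℤ × ℤ) := Finset.Icc (0:ℤ) n ×ˢ Finset.Icc (0:ℤ) n with hS
  have hScard : S.card = (n + 1) * (n + 1) := by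
    rw [hS, Finset.card_product, Int.card_Icc]
    simp
  have hcard : (Finset.univ : Finset (ZMod p)).card < S.card := by
    rw [hScard, Finset.card_univ, ZMod.card p]; nlinarith
  obtain ⟨q1, hq1, q2, hq2, hne, heq⟩ :=
    Finset.exists_ne_map_eq_of_card_lt_of_maps_to (by simpa using hcard)
      (fun (q : ℤ × ℤ) _ => Finset.mem_univ ((q.1 : ZMod p) - a * q.2))
  set x : ℤ := q1.1 - q2.1 with hx
  set y : ℤ := q1.2 - q2.2 with hy
  have hxy : ((x : ZMod p)) = a * (y : ZMod p) := by
    push_cast [hx, hy]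
    linear_combination heq
  have hdvd : (p : ℤ) ∣ x ^ 2 - 2 * y ^ 2 := by
    rw [← ZMod.intCast_zmod_eq_zero_iff_dvd]
    push_cast
    rw [hxy]
    linear_combination (-((y : ZMod p) ^ 2)) * ha
  -- bounds
  rw [hS] at hq1 hq2
  simp only [Finset.mem_product, Finset.mem_Icc] at hq1 hq2
  have hxb : x ^ 2 ≤ (n : ℤ) ^ 2 := by nlinarith [hq1.1.1, hq1.1.2, hq2.1.1, hq2.1.2]
  have hyb : y ^ 2 ≤ (n : ℤ) ^ 2 := by nlinarith [hq1.2.1, hq1.2.2, hq2.2.1, hq2.2.2]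
  have hnp : (n : ℤ) ^ 2 < p := by exact_mod_cast hn2
  have hne0 : x ^ 2 - 2 * y ^ 2 ≠ 0 := by
    intro h0
    have h1 : x ^ 2 = 2 * y ^ 2 := by linarith
    obtain ⟨hx0, hy0⟩ := aux_sq_ne x y h1
    exact hne (Prod.ext (by omega) (by omega))
  have hppos : (0 : ℤ) < p := by exact_mod_cast hp.pos
  obtain ⟨k, hk⟩ := hdvd
  have hk1 : k < 1 := by
    have hlt : (p : ℤ) * k < p * 1 := by linarith [sq_nonneg y]
    exact lt_of_mul_lt_mul_left hlt (le_of_lt hppos)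
  have hk2 : -2 < k := by
    have hgt : (p : ℤ) * (-2) < p * k := by linarith [sq_nonneg x]
    exact lt_of_mul_lt_mul_left hgt (le_of_lt hppos)
  have hkne : k ≠ 0 := by rintro rfl; simp at hk; exact hne0 hk
  have hkm1 : k = -1 := by omega
  rw [hkm1] at hk
  -- p = 2y² - x²; convert to u² - 2v²
  have hrep : (p : ℤ) = (x + 2*y) ^ 2 - 2 * (x + y) ^ 2 := by linear_combination hk
  clear hxy hxb hyb hnp hne0 hk1 hk2 hkne hkm1 hk hne hq1 hq2 heq hcard hps hn2 ha
  set u0 : ℤ := x + 2*y with hu0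
  set v0 : ℤ := x + y with hv0
  clear_value u0 v0
  clear hu0 hv0 hx hy
  -- u0 is odd
  have hpodd : (p : ℤ) % 2 = 1 := by omega
  have hu0odd' : u0 % 2 = 1 ∨ u0 % 2 = -1 := by
    rcases Int.even_or_odd u0 with ⟨c, hc⟩ | ⟨c, hc⟩
    · exfalso
      have : (2:ℤ) ∣ (p : ℤ) := ⟨2 * c ^ 2 - v0 ^ 2, by rw [hrep, hc]; ring⟩
      omega
    · omega
  have hu0ne : u0 ≠ 0 := by omega
  set w : ℤ := |u0| with hw
  have hwrep : (p : ℤ) = w ^ 2 - 2 * v0 ^ 2 := by rw [hrep, hw, sq_abs]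
  have hwpos : 0 < w := by rw [hw]; exact abs_pos.mpr hu0ne
  have hwch : w = u0 ∨ w = -u0 := by rw [hw]; exact abs_choice u0
  have hwodd : w % 4 = 1 ∨ w % 4 = 3 := by omega
  rcases hwodd with h | h
  · exact ⟨w, v0, hwrep, hwpos, h⟩
  · -- multiply by ε² = 3 + 2√2, choosing sign of v0 so result positive
    rcases le_or_gt 0 (3*w + 4*v0) with hpos | hneg
    · refine ⟨3*w + 4*v0, 2*w + 3*v0, by rw [hwrep]; ring, ?_, by omega⟩
      rcases lt_or_eq_of_le hpos with h1 | h1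
      · exact h1
      · exfalso; omega
    · exact ⟨3*w - 4*v0, 2*w - 3*v0, by rw [hwrep]; ring, by linarith, by omega⟩
end
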